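/- In the r-color model M with r ≥ 3 colors, for any two distinct colors i ≠ j and all n ≥ 0, Cov(X_{n,i}, X_{n,j}) = [C(n−1+λ_1, n)·C(n−1+λ_2, n) / (C(n−1+T_0/(mc), n)·C(n−1+(T_0−1)/(mc), n))]·X_{0,i}·X_{0,j} − [(mc)²·(n + T_0/(mc))²/T_0²]·X_{0,i}·X_{0,j}, where C(x,n) denotes the generalized binomial coefficient for real x. -/

import Mathlib

open Finset

/-- Total initial number of balls in the `r`-color urn. -/
def totX (r : ℕ) (X0 : Fin r → ℕ) : ℕ := ∑ i, X0 i

/-- Total number of balls after `n` draws: `T_n = T_0 + n·m·c`. -/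
def urnTr (r m c : ℕ) (X0 : Fin r → ℕ) (n : ℕ) : ℕ := totX r X0 + n * m * c

/-- Probability mass function of the composition vector after `n` draws in the
`r`-color model `M`: at each step `m` balls are drawn without replacement and, if
`kᵢ` balls of color `i` are drawn, they are returned together with `c·kᵢ` additional
balls of color `i`. -/
noncomputable def massMr (r m c : ℕ) (X0 : Fin r → ℕ) : ℕ → (Fin r → ℕ) → ℝ
  | 0 => fun x => if x = X0 then 1 else 0
  | n + 1 => fun x =>
      ∑ y ∈ Fintype.piFinset (fun _ : Fin r => Finset.range (urnTr r m c X0 n + 1)),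
        ∑ k ∈ Fintype.piFinset (fun _ : Fin r => Finset.range (m + 1)),
          if (∑ i, k i) = m ∧ x = (fun i => y i + c * k i) then
            massMr r m c X0 n y *
              ((∏ i, (Nat.choose (y i) (k i) : ℝ)) / (Nat.choose (urnTr r m c X0 n) m : ℝ))
          else 0

/-- The covariance `Cov(X_{n,i}, X_{n,j})` in the `r`-color model `M`. -/
noncomputable def covMr (r m c : ℕ) (X0 : Fin r → ℕ) (n : ℕ) (i j : Fin r) : ℝ :=
  (∑ x ∈ Fintype.piFinset (fun _ : Fin r => Finset.range (urnTr r m c X0 n + 1)),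
      massMr r m c X0 n x * (x i : ℝ) * (x j : ℝ)) -
    (∑ x ∈ Fintype.piFinset (fun _ : Fin r => Finset.range (urnTr r m c X0 n + 1)),
        massMr r m c X0 n x * (x i : ℝ)) *
      (∑ x ∈ Fintype.piFinset (fun _ : Fin r => Finset.range (urnTr r m c X0 n + 1)),
        massMr r m c X0 n x * (x j : ℝ))

/-- Generalized binomial coefficient `C(x,n) = x(x-1)⋯(x-n+1)/n!` for real `x`. -/
noncomputable def gchoose (x : ℝ) (n : ℕ) : ℝ :=
  (∏ i ∈ Finset.range n, (x - (i : ℝ))) / (Nat.factorial n : ℝ)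

/-!
Given the composition `y` after `n` draws, with `∑ y = T_n`, the vector `k` of drawn colours is
multivariate hypergeometric, so `E[k_i] = m y_i / T_n` and, for `i ≠ j`,
`E[k_i k_j] = m (m - 1) y_i y_j / (T_n (T_n - 1))`; both follow from the multivariate Vandermonde
identity by splitting off one colour at a time. Hence `E[X_{n+1,i}] = (1 + mc/T_n) E[X_{n,i}]`,
so `E[X_{n,i}] = X_{0,i} T_n / T_0`, and `E[X_{n+1,i} X_{n+1,j}]` is `E[X_{n,i} X_{n,j}]` times
`1 + 2mc/T_n + c²m(m-1)/(T_n(T_n-1))`, which factors as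
`(λ₁ + n)(λ₂ + n) / ((T_0/(mc) + n)((T_0-1)/(mc) + n))`.
The product of these factors is the stated ratio of generalized binomial coefficients.
-/

section Hypergeometric

variable {ι : Type*} [DecidableEq ι]

theorem sum_piAntidiag_mul_eq_sum_antidiagonal {R : Type*} [CommSemiring R] {s : Finset ι}
    {i : ι} (hi : i ∈ s) (n : ℕ) (g : ℕ → R) (F : (ι → ℕ) → R)
    (hF : ∀ k a, F (Function.update k i a) = F k) :
    ∑ k ∈ piAntidiag s n, g (k i) * F k
      = ∑ p ∈ antidiagonal n, g p.1 * ∑ k ∈ piAntidiag (s.erase i) p.2, F k := by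
  have hs : s = cons i (s.erase i) (notMem_erase i s) := by
    rw [cons_eq_insert, insert_erase hi]
  conv_lhs => rw [hs, piAntidiag_cons, sum_disjiUnion]
  refine sum_congr rfl fun p _ => ?_
  rw [sum_map, mul_sum]
  refine sum_congr rfl fun k hk => ?_
  have hki : k i = 0 := by
    by_contra h
    exact notMem_erase i s ((mem_piAntidiag.1 hk).2 i h)
  have hupdate : (k + fun t => if t = i then p.1 else 0) = Function.update k i p.1 := by
    ext t
    by_cases ht : t = i
    · subst ht; simp [hki]
    · simp [ht]
  simp [hupdate, hF, hki]

theorem prod_choose_update_eq {s : Finset ι} {i : ι} (hi : i ∉ s) (y k : ι → ℕ) (a : ℕ) :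
    ∏ l ∈ s, (y l).choose (Function.update k i a l) = ∏ l ∈ s, (y l).choose (k l) :=
  prod_congr rfl fun l hl => by rw [Function.update_of_ne (ne_of_mem_of_not_mem hl hi)]

theorem sum_piAntidiag_prod_choose (s : Finset ι) (y : ι → ℕ) (n : ℕ) :
    ∑ k ∈ piAntidiag s n, ∏ l ∈ s, (y l).choose (k l) = (∑ l ∈ s, y l).choose n := by
  induction s using Finset.cons_induction generalizing n with
  | empty => cases n <;> simp
  | cons i s hi ih =>
    have his : i ∈ cons i s hi := mem_cons_self i s
    simp_rw [← mul_prod_erase _ _ his]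
    rw [sum_piAntidiag_mul_eq_sum_antidiagonal his n _ _
      fun k a => prod_choose_update_eq (notMem_erase i _) y k a]
    simp_rw [erase_cons, ih]
    rw [sum_cons, Nat.add_choose_eq]

theorem sum_antidiagonal_mul_choose_mul_choose (p q m : ℕ) :
    ∑ x ∈ antidiagonal (m + 1), x.1 * p.choose x.1 * q.choose x.2
      = p * (p + q - 1).choose m := by
  cases p with
  | zero =>
    rw [zero_mul]
    exact sum_eq_zero fun x _ => by rcases x with ⟨_ | a, b⟩ <;> simp
  | succ p =>
    rw [Nat.sum_antidiagonal_succ]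
    have hshift : ∀ x ∈ antidiagonal m, (x.1 + 1) * (p + 1).choose (x.1 + 1) * q.choose x.2
        = (p + 1) * (p.choose x.1 * q.choose x.2) := fun x _ => by
      rw [mul_comm (x.1 + 1), ← Nat.add_one_mul_choose_eq]; ring
    rw [sum_congr rfl hshift, ← mul_sum, ← Nat.add_choose_eq, Nat.add_right_comm,
      Nat.add_sub_cancel]
    simp

theorem sum_piAntidiag_mul_prod_choose {s : Finset ι} {i : ι} (hi : i ∈ s) (y : ι → ℕ)
    (m : ℕ) :
    ∑ k ∈ piAntidiag s (m + 1), k i * ∏ l ∈ s, (y l).choose (k l)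
      = y i * ((∑ l ∈ s, y l) - 1).choose m := by
  simp_rw [← mul_prod_erase s _ hi, ← mul_assoc]
  rw [sum_piAntidiag_mul_eq_sum_antidiagonal hi _ (fun a => a * (y i).choose a)
    (fun k => ∏ l ∈ s.erase i, (y l).choose (k l))
    fun k a => prod_choose_update_eq (notMem_erase i s) y k a]
  simp_rw [sum_piAntidiag_prod_choose]
  rw [sum_antidiagonal_mul_choose_mul_choose, add_sum_erase s y hi]

theorem sum_piAntidiag_mul_mul_prod_choose {s : Finset ι} {i j : ι} (hi : i ∈ s) (hj : j ∈ s)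
    (hij : i ≠ j) (y : ι → ℕ) (m : ℕ) :
    ∑ k ∈ piAntidiag s (m + 2), k i * k j * ∏ l ∈ s, (y l).choose (k l)
      = y i * y j * ((∑ l ∈ s, y l) - 2).choose m := by
  have hj' : j ∈ s.erase i := mem_erase.2 ⟨hij.symm, hj⟩
  set Q := ∑ l ∈ s.erase i, y l with hQ
  simp_rw [← mul_prod_erase s _ hi]
  rw [sum_congr rfl fun k _ => mul_mul_mul_comm (k i) (k j) _ _]
  rw [sum_piAntidiag_mul_eq_sum_antidiagonal hi _ (fun a => a * (y i).choose a)
    (fun k => k j * ∏ l ∈ s.erase i, (y l).choose (k l))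
    fun k a => by rw [prod_choose_update_eq (notMem_erase i s), Function.update_of_ne hij.symm]]
  rw [Nat.sum_antidiagonal_succ']
  simp_rw [sum_piAntidiag_mul_prod_choose hj', ← hQ]
  simp only [piAntidiag_zero, sum_singleton, Pi.zero_apply, zero_mul, mul_zero, zero_add]
  have hterm : ∀ x ∈ antidiagonal (m + 1),
      x.1 * (y i).choose x.1 * (y j * (Q - 1).choose x.2)
        = y j * (x.1 * (y i).choose x.1 * (Q - 1).choose x.2) := fun x _ => by ring
  rw [sum_congr rfl hterm, ← mul_sum, sum_antidiagonal_mul_choose_mul_choose,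
    ← add_sum_erase s y hi, ← hQ]
  rcases Nat.eq_zero_or_pos (y j) with hyj | hyj
  · simp [hyj]
  · have : y j ≤ Q := single_le_sum (fun _ _ => Nat.zero_le _) hj'
    rw [show y i + (Q - 1) - 1 = y i + Q - 2 by omega]
    ring

variable [Fintype ι]

theorem filter_piFinset_range_sum_eq_piAntidiag (m : ℕ) :
    (Fintype.piFinset fun _ : ι => range (m + 1)).filter (fun k => ∑ l, k l = m)
      = piAntidiag univ m := by
  ext k
  simp only [mem_filter, Fintype.mem_piFinset, mem_range, mem_piAntidiag, mem_univ,
    implies_true, and_true, and_iff_right_iff_imp]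
  exact fun hk l => Nat.lt_succ_of_le (hk ▸ single_le_sum (fun _ _ => Nat.zero_le _) (mem_univ l))

-- Total mass, mean and mixed second factorial moment of the multivariate hypergeometric law.
theorem sum_piAntidiag_prod_choose_div {y : ι → ℕ} {T m : ℕ} (hT : ∑ l, y l = T)
    (hmT : m ≤ T) :
    ∑ k ∈ piAntidiag univ m, (∏ l, ((y l).choose (k l) : ℝ)) / (T.choose m : ℝ) = 1 := by
  have hC : (T.choose m : ℝ) ≠ 0 := by exact_mod_cast (Nat.choose_pos hmT).ne'
  rw [← sum_div, div_eq_one_iff_eq hC, ← hT]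
  exact_mod_cast sum_piAntidiag_prod_choose univ y m

theorem sum_piAntidiag_prod_choose_div_mul {y : ι → ℕ} {T m : ℕ} (hT : ∑ l, y l = T)
    (hmT : m ≤ T) (i : ι) :
    ∑ k ∈ piAntidiag univ m,
        (∏ l, ((y l).choose (k l) : ℝ)) / (T.choose m : ℝ) * (k i : ℝ) = m * y i / T := by
  cases m with
  | zero => simp
  | succ m =>
    obtain ⟨T, rfl⟩ : ∃ T', T = T' + 1 := ⟨T - 1, by omega⟩
    have hC : ((T + 1).choose (m + 1) : ℝ) ≠ 0 := by exact_mod_cast (Nat.choose_pos hmT).ne'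
    have hsum := sum_piAntidiag_mul_prod_choose (mem_univ i) y m
    have hpascal := Nat.add_one_mul_choose_eq T m
    rw [hT, Nat.add_sub_cancel] at hsum
    simp_rw [div_mul_eq_mul_div, ← sum_div]
    rw [div_eq_div_iff hC (by positivity)]
    have : ∑ k ∈ piAntidiag univ (m + 1), (∏ l, ((y l).choose (k l) : ℝ)) * (k i : ℝ)
        = (y i : ℝ) * (T.choose m : ℝ) := by
      exact_mod_cast (sum_congr rfl fun k _ => mul_comm _ _).trans hsum
    have hcast : ((T + 1 : ℕ) : ℝ) * T.choose m
        = (T + 1).choose (m + 1) * ((m + 1 : ℕ) : ℝ) := by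
      exact_mod_cast hpascal
    rw [this]
    linear_combination (y i : ℝ) * hcast

theorem sum_piAntidiag_prod_choose_div_mul_mul {y : ι → ℕ} {T m : ℕ} (hT : ∑ l, y l = T)
    (hmT : m ≤ T) {i j : ι} (hij : i ≠ j) :
    ∑ k ∈ piAntidiag univ m,
        (∏ l, ((y l).choose (k l) : ℝ)) / (T.choose m : ℝ) * (k i : ℝ) * (k j : ℝ)
      = m * (m - 1) * y i * y j / (T * (T - 1)) := by
  match m, hmT with
  | 0, _ => simp
  | 1, _ =>
    refine (sum_eq_zero fun k hk => ?_).trans (by simp)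
    have hkij : k i + k j ≤ 1 :=
      (mem_piAntidiag.1 hk).1 ▸
        add_le_sum (fun _ _ => Nat.zero_le _) (mem_univ i) (mem_univ j) hij
    obtain h | h : k i = 0 ∨ k j = 0 := by omega
    all_goals simp [h]
  | m + 2, hmT =>
    obtain ⟨T, rfl⟩ : ∃ T', T = T' + 2 := ⟨T - 2, by omega⟩
    have hC : ((T + 2).choose (m + 2) : ℝ) ≠ 0 := by exact_mod_cast (Nat.choose_pos hmT).ne'
    have hsum := sum_piAntidiag_mul_mul_prod_choose (mem_univ i) (mem_univ j) hij y m
    have hpascal₁ := Nat.add_one_mul_choose_eq T m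
    have hpascal₂ := Nat.add_one_mul_choose_eq (T + 1) (m + 1)
    rw [hT, Nat.add_sub_cancel] at hsum
    simp_rw [mul_assoc, div_mul_eq_mul_div, ← sum_div]
    have hden : ((T + 2 : ℕ) : ℝ) * ((T + 2 : ℕ) - 1) ≠ 0 := by push_cast; nlinarith
    rw [div_eq_div_iff hC hden]
    have : ∑ k ∈ piAntidiag univ (m + 2),
        (∏ l, ((y l).choose (k l) : ℝ)) * ((k i : ℝ) * (k j : ℝ))
        = (y i : ℝ) * y j * (T.choose m : ℝ) := by
      exact_mod_cast (sum_congr rfl fun k _ => by ring).trans hsum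
    rw [this]
    have hcast : (((T + 1 + 1) * ((T + 1) * T.choose m) : ℕ) : ℝ)
        = (((T + 2).choose (m + 2) * ((m + 1 + 1) * (m + 1)) : ℕ) : ℝ) := by
      rw [hpascal₁, ← mul_assoc, hpascal₂]; ring_nf
    push_cast at hcast ⊢
    linear_combination (y i : ℝ) * y j * hcast

end Hypergeometric

section UrnModel

variable {r m c : ℕ} {X0 : Fin r → ℕ}

noncomputable def urnMean (r m c : ℕ) (X0 : Fin r → ℕ) (n : ℕ)
    (f : (Fin r → ℕ) → ℝ) : ℝ :=
  ∑ x ∈ Fintype.piFinset (fun _ : Fin r => range (urnTr r m c X0 n + 1)),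
    massMr r m c X0 n x * f x

theorem covMr_eq_urnMean (n : ℕ) (i j : Fin r) :
    covMr r m c X0 n i j = urnMean r m c X0 n (fun x => x i * x j)
      - urnMean r m c X0 n (fun x => x i) * urnMean r m c X0 n (fun x => x j) := by
  simp only [covMr, urnMean, mul_assoc]

theorem urnTr_succ (n : ℕ) : urnTr r m c X0 (n + 1) = urnTr r m c X0 n + m * c := by
  simp only [urnTr]; ring

theorem sum_eq_urnTr_of_massMr_ne_zero {n : ℕ} {x : Fin r → ℕ}
    (hx : massMr r m c X0 n x ≠ 0) :
    ∑ l, x l = urnTr r m c X0 n := by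
  induction n generalizing x with
  | zero =>
    simp only [massMr, ne_eq, ite_eq_right_iff, one_ne_zero, imp_false, not_not] at hx
    simp [hx, urnTr, totX]
  | succ n ih =>
    obtain ⟨y, -, hy⟩ := exists_ne_zero_of_sum_ne_zero hx
    obtain ⟨k, -, hk⟩ := exists_ne_zero_of_sum_ne_zero hy
    obtain ⟨⟨hkm, rfl⟩, hmass⟩ : ((∑ l, k l) = m ∧ x = fun l => y l + c * k l) ∧
        massMr r m c X0 n y ≠ 0 := by
      by_contra h
      apply hk
      split_ifs with hP
      · rw [not_not.1 (not_and.1 h hP), zero_mul]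
      · rfl
    rw [sum_add_distrib, ← mul_sum, ih hmass, hkm, urnTr_succ, mul_comm c]

theorem urnMean_congr {n : ℕ} {f g : (Fin r → ℕ) → ℝ}
    (h : ∀ x, ∑ l, x l = urnTr r m c X0 n → f x = g x) :
    urnMean r m c X0 n f = urnMean r m c X0 n g := by
  refine sum_congr rfl fun x _ => ?_
  by_cases hx : massMr r m c X0 n x = 0
  · simp [hx]
  · rw [h x (sum_eq_urnTr_of_massMr_ne_zero hx)]

theorem urnMean_const_mul (n : ℕ) (a : ℝ) (f : (Fin r → ℕ) → ℝ) :
    urnMean r m c X0 n (fun x => a * f x) = a * urnMean r m c X0 n f := by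
  simp only [urnMean, mul_sum, mul_left_comm]

theorem urnMean_zero (f : (Fin r → ℕ) → ℝ) : urnMean r m c X0 0 f = f X0 := by
  have hX0 : X0 ∈ Fintype.piFinset (fun _ : Fin r => range (urnTr r m c X0 0 + 1)) := by
    simp only [Fintype.mem_piFinset, mem_range, urnTr, totX]
    exact fun l => Nat.lt_succ_of_le (single_le_sum (fun _ _ => Nat.zero_le _) (mem_univ l)
      |>.trans (Nat.le_add_right _ _))
  simp [urnMean, massMr, hX0]

theorem urnMean_succ (n : ℕ) (f : (Fin r → ℕ) → ℝ) :
    urnMean r m c X0 (n + 1) f = urnMean r m c X0 n fun y =>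
      ∑ k ∈ piAntidiag univ m, (∏ l, ((y l).choose (k l) : ℝ)) /
        ((urnTr r m c X0 n).choose m : ℝ) * f (fun l => y l + c * k l) := by
  simp only [urnMean, massMr, sum_mul]
  rw [sum_comm]
  refine sum_congr rfl fun y hy => ?_
  rw [sum_comm, mul_sum, ← filter_piFinset_range_sum_eq_piAntidiag, sum_filter]
  refine sum_congr rfl fun k hk => ?_
  split_ifs with hkm
  · have hmem : (fun l => y l + c * k l)
        ∈ Fintype.piFinset (fun _ : Fin r => range (urnTr r m c X0 (n + 1) + 1)) := by
      simp only [Fintype.mem_piFinset, mem_range, urnTr_succ] at hy hk ⊢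
      intro l
      have := Nat.mul_le_mul_left c (Nat.lt_succ_iff.1 (hk l))
      linarith [hy l]
    simp only [hkm, true_and, ite_mul, zero_mul, sum_ite_eq', hmem, if_true]
    ring
  · simp [hkm]

theorem urnMean_succ_apply (hmT : m ≤ totX r X0) (n : ℕ) (i : Fin r) :
    urnMean r m c X0 (n + 1) (fun x => (x i : ℝ))
      = (1 + c * m / urnTr r m c X0 n) * urnMean r m c X0 n (fun x => (x i : ℝ)) := by
  rw [urnMean_succ, ← urnMean_const_mul]
  refine urnMean_congr fun y hy => ?_
  have hmT' : m ≤ urnTr r m c X0 n := hmT.trans (Nat.le_add_right _ _)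
  simp only [Nat.cast_add, Nat.cast_mul, mul_add, sum_add_distrib, ← sum_mul,
    mul_left_comm _ (c : ℝ), ← mul_sum, sum_piAntidiag_prod_choose_div hy hmT',
    sum_piAntidiag_prod_choose_div_mul hy hmT']
  ring

theorem urnMean_apply (hmT : m ≤ totX r X0) (hT : 0 < totX r X0) (n : ℕ) (i : Fin r) :
    urnMean r m c X0 n (fun x => (x i : ℝ)) = X0 i * urnTr r m c X0 n / totX r X0 := by
  induction n with
  | zero => simp [urnMean_zero, urnTr, hT.ne']
  | succ n ih =>
    have hTn : (urnTr r m c X0 n : ℝ) ≠ 0 := by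
      exact_mod_cast (hT.trans_le (Nat.le_add_right _ _)).ne'
    rw [urnMean_succ_apply hmT, ih, urnTr_succ]
    field_simp
    push_cast
    ring

noncomputable def crossMomentFactor (m c : ℕ) (T : ℝ) : ℝ :=
  1 + 2 * c * m / T + c ^ 2 * m * (m - 1) / (T * (T - 1))

theorem urnMean_succ_apply_mul_apply (hmT : m ≤ totX r X0) (n : ℕ) {i j : Fin r}
    (hij : i ≠ j) :
    urnMean r m c X0 (n + 1) (fun x => (x i : ℝ) * x j)
      = crossMomentFactor m c (urnTr r m c X0 n) *
          urnMean r m c X0 n (fun x => (x i : ℝ) * x j) := by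
  rw [urnMean_succ, ← urnMean_const_mul]
  refine urnMean_congr fun y hy => ?_
  have hmT' : m ≤ urnTr r m c X0 n := hmT.trans (Nat.le_add_right _ _)
  have hexpand : ∀ (w : ℝ) (k : Fin r → ℕ),
      w * ((y i + c * k i : ℕ) * (y j + c * k j : ℕ) : ℝ)
        = y i * y j * w + c * y j * (w * k i) + c * y i * (w * k j) + c ^ 2 * (w * k i * k j) := by
    intro w k; push_cast; ring
  simp only [hexpand, sum_add_distrib, ← mul_sum, sum_piAntidiag_prod_choose_div hy hmT',
    sum_piAntidiag_prod_choose_div_mul hy hmT', sum_piAntidiag_prod_choose_div_mul_mul hy hmT' hij]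
  rw [crossMomentFactor]
  ring

theorem urnMean_apply_mul_apply (hmT : m ≤ totX r X0) {i j : Fin r} (hij : i ≠ j) (n : ℕ) :
    urnMean r m c X0 n (fun x => (x i : ℝ) * x j)
      = X0 i * X0 j * ∏ t ∈ range n, crossMomentFactor m c (urnTr r m c X0 t) := by
  induction n with
  | zero => simp [urnMean_zero]
  | succ n ih => rw [urnMean_succ_apply_mul_apply hmT n hij, ih, prod_range_succ]; ring

end UrnModel

theorem gchoose_sub_one_add (a : ℝ) (n : ℕ) :
    gchoose ((n : ℝ) - 1 + a) n = (∏ t ∈ range n, (a + t)) / n.factorial := by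
  rw [gchoose, ← prod_range_reflect (fun t : ℕ => a + t) n]
  congr 1
  refine prod_congr rfl fun t ht => ?_
  have ht : 1 + t ≤ n := by have := mem_range.1 ht; omega
  rw [Nat.sub_sub, Nat.cast_sub ht]
  push_cast
  ring

theorem prod_range_div_eq_gchoose (a b d e : ℝ) (n : ℕ) :
    ∏ t ∈ range n, ((a + t) * (b + t) / ((d + t) * (e + t)))
      = gchoose ((n : ℝ) - 1 + a) n * gchoose ((n : ℝ) - 1 + b) n /
          (gchoose ((n : ℝ) - 1 + d) n * gchoose ((n : ℝ) - 1 + e) n) := by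
  have hfac : (n.factorial : ℝ) * n.factorial ≠ 0 := by positivity
  simp only [gchoose_sub_one_add, prod_div_distrib, prod_mul_distrib, div_mul_div_comm,
    div_div_div_cancel_right₀ hfac]

-- At T = T_t the numerator T(T-1) + 2mc(T-1) + c²m(m-1) of the factor is
-- (T + mc - 1/2)² - (1 + 4mc(1+c))/4 = (mc)²(λ₁ + t)(λ₂ + t), and T = mc(T₀/(mc) + t).
theorem crossMomentFactor_urnTr {r m c : ℕ} {X0 : Fin r → ℕ} (hm : 1 ≤ m) (hc : 1 ≤ c)
    (hT : 2 ≤ totX r X0) {lam1 lam2 : ℝ}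
    (hlam1 : lam1 = (-(1/2) + (m : ℝ) * c + (totX r X0 : ℝ) +
      (1/2) * Real.sqrt (1 + 4 * (m : ℝ) * c * (1 + (c : ℝ)))) / ((m : ℝ) * c))
    (hlam2 : lam2 = (-(1/2) + (m : ℝ) * c + (totX r X0 : ℝ) -
      (1/2) * Real.sqrt (1 + 4 * (m : ℝ) * c * (1 + (c : ℝ)))) / ((m : ℝ) * c)) (t : ℕ) :
    crossMomentFactor m c (urnTr r m c X0 t)
      = (lam1 + t) * (lam2 + t) /
          (((totX r X0 : ℝ) / ((m : ℝ) * c) + t) *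
            (((totX r X0 : ℝ) - 1) / ((m : ℝ) * c) + t)) := by
  have hμ : (0 : ℝ) < m * c := by positivity
  set s := Real.sqrt (1 + 4 * (m : ℝ) * c * (1 + c))
  have hs : s ^ 2 = 1 + 4 * (m : ℝ) * c * (1 + c) := Real.sq_sqrt (by positivity)
  set T : ℝ := (urnTr r m c X0 t : ℝ) with hTdef
  have hTt : T = totX r X0 + t * (m * c) := by simp only [hTdef, urnTr]; push_cast; ring
  have hT2 : 2 ≤ T := by
    have : (2 : ℝ) ≤ totX r X0 := by exact_mod_cast hT
    nlinarith [hTt]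
  have hlam1t : lam1 + t = (T + m * c - 1/2 + s/2) / (m * c) := by
    rw [hlam1, hTt]; field_simp; ring
  have hlam2t : lam2 + t = (T + m * c - 1/2 - s/2) / (m * c) := by
    rw [hlam2, hTt]; field_simp; ring
  have hT0t : (totX r X0 : ℝ) / (m * c) + t = T / (m * c) := by rw [hTt]; field_simp
  have hT1t : ((totX r X0 : ℝ) - 1) / (m * c) + t = (T - 1) / (m * c) := by
    rw [hTt]; field_simp; ring
  rw [hlam1t, hlam2t, hT0t, hT1t, div_mul_div_comm, div_mul_div_comm,
    div_div_div_cancel_right₀ (by positivity), crossMomentFactor]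
  have hT1 : T - 1 ≠ 0 := by linarith
  field_simp
  linear_combination hs

theorem modelMr_covariance_general (r m c : ℕ) (X0 : Fin r → ℕ) (hm : 1 ≤ m)
    (hc : 1 ≤ c) (hX0 : ∀ i, 1 ≤ X0 i) (hT0 : m ≤ totX r X0)
    (i j : Fin r) (hij : i ≠ j)
    (lam1 lam2 : ℝ)
    (hlam1 : lam1 = (-(1/2) + (m : ℝ) * c + (totX r X0 : ℝ) +
      (1/2) * Real.sqrt (1 + 4 * (m : ℝ) * c * (1 + (c : ℝ)))) / ((m : ℝ) * c))
    (hlam2 : lam2 = (-(1/2) + (m : ℝ) * c + (totX r X0 : ℝ) -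
      (1/2) * Real.sqrt (1 + 4 * (m : ℝ) * c * (1 + (c : ℝ)))) / ((m : ℝ) * c)) :
    ∀ n : ℕ, covMr r m c X0 n i j =
      (gchoose ((n : ℝ) - 1 + lam1) n * gchoose ((n : ℝ) - 1 + lam2) n) /
          (gchoose ((n : ℝ) - 1 + (totX r X0 : ℝ) / ((m : ℝ) * c)) n *
            gchoose ((n : ℝ) - 1 + ((totX r X0 : ℝ) - 1) / ((m : ℝ) * c)) n) *
          ((X0 i : ℝ) * (X0 j : ℝ)) -
        ((m : ℝ) * c) ^ 2 * ((n : ℝ) + (totX r X0 : ℝ) / ((m : ℝ) * c)) ^ 2 /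
            (totX r X0 : ℝ) ^ 2 * ((X0 i : ℝ) * (X0 j : ℝ)) := by
  intro n
  have hT2 : 2 ≤ totX r X0 :=
    (add_le_add (hX0 i) (hX0 j)).trans
      (add_le_sum (fun _ _ => Nat.zero_le _) (mem_univ i) (mem_univ j) hij)
  have hmc : (m : ℝ) * c ≠ 0 := by positivity
  have hT : (totX r X0 : ℝ) ≠ 0 := by positivity
  have hTn : (urnTr r m c X0 n : ℝ) = totX r X0 + n * (m * c) := by
    simp only [urnTr]; push_cast; ring
  rw [covMr_eq_urnMean, urnMean_apply_mul_apply hT0 hij, urnMean_apply hT0 (by omega),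
    urnMean_apply hT0 (by omega),
    prod_congr rfl fun t _ => crossMomentFactor_urnTr hm hc hT2 hlam1 hlam2 t,
    prod_range_div_eq_gchoose, hTn]
  field_simp
  ring

/-- In the `r`-color model `M` with `r ≥ 3`, the exact covariance of the numbers of
balls of two distinct colors `i ≠ j` after `n` draws. -/
theorem modelMr_covariance (r m c : ℕ) (X0 : Fin r → ℕ) (hr : 3 ≤ r) (hm : 1 ≤ m)
    (hc : 1 ≤ c) (hX0 : ∀ i, 1 ≤ X0 i) (hT0 : m ≤ totX r X0)
    (i j : Fin r) (hij : i ≠ j)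
    (lam1 lam2 : ℝ)
    (hlam1 : lam1 = (-(1/2) + (m : ℝ) * c + (totX r X0 : ℝ) +
      (1/2) * Real.sqrt (1 + 4 * (m : ℝ) * c * (1 + (c : ℝ)))) / ((m : ℝ) * c))
    (hlam2 : lam2 = (-(1/2) + (m : ℝ) * c + (totX r X0 : ℝ) -
      (1/2) * Real.sqrt (1 + 4 * (m : ℝ) * c * (1 + (c : ℝ)))) / ((m : ℝ) * c)) :
    ∀ n : ℕ, covMr r m c X0 n i j =
      (gchoose ((n : ℝ) - 1 + lam1) n * gchoose ((n : ℝ) - 1 + lam2) n) /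
          (gchoose ((n : ℝ) - 1 + (totX r X0 : ℝ) / ((m : ℝ) * c)) n *
            gchoose ((n : ℝ) - 1 + ((totX r X0 : ℝ) - 1) / ((m : ℝ) * c)) n) *
          ((X0 i : ℝ) * (X0 j : ℝ)) -
        ((m : ℝ) * c) ^ 2 * ((n : ℝ) + (totX r X0 : ℝ) / ((m : ℝ) * c)) ^ 2 /
            (totX r X0 : ℝ) ^ 2 * ((X0 i : ℝ) * (X0 j : ℝ)) :=
  modelMr_covariance_general r m c X0 hm hc hX0 hT0 i j hij lam1 lam2 hlam1 hlam2
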